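/- arXiv:1407.6176 — 3 statements merged into one kernel-verified Lean document; each statement's English description precedes it below -/
import Mathlib

section
/- Let p ≥ 1 be an integer, let ζ : ℕ → ℝ be a sequence, and define z(n) = Σ_{l=0}^{n} (n!/(n−l)!) · ζ(l). Then for every n ∈ ℕ: Σ_{(l_1,…,l_p) ∈ ℕ^p, l_1+…+l_p ≤ n} ζ(l_1)⋯ζ(l_p) · n!/(n−(l_1+…+l_p))! = n! · Σ_{(k_1,…,k_p) ∈ ℕ^p, k_1+…+k_p ≤ n} (−1)^{k_1+…+k_p+n} · (p−1)^{n−(k_1+…+k_p)} / (k_1!⋯k_p! · (n−(k_1+…+k_p))!) · z(k_1)⋯z(k_p), with the convention 0^0 = 1. -/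
/-!
Multiplying a power series by `exp` turns its coefficient sequence `a` into the sequence
`n ↦ (∑ₗ n!/(n-l)! a(l)) / n!`. Hence, with `A = ∑ ζ(l) Xˡ`, the exponential generating function of
`z` is `Z = A · exp`, and the left-hand side is `n!` times the `n`-th coefficient of `Aᵖ · exp`.
Since `expᵖ = exp(pX)`, we have `Aᵖ · exp = Zᵖ · exp((1 - p)X)`, and expanding this product
coefficientwise gives the right-hand side.
-/

open PowerSeries Finset Nat

lemma neg_one_pow_add_eq_neg_one_pow_sub {R : Type*} [Monoid R] [HasDistribNeg R] {t n : ℕ}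
    (h : t ≤ n) : (-1 : R) ^ (t + n) = (-1) ^ (n - t) := by
  obtain ⟨d, rfl⟩ := Nat.exists_eq_add_of_le h
  rw [Nat.add_sub_cancel_left, ← add_assoc, pow_add, ← two_mul, pow_mul, neg_one_sq, one_pow,
    one_mul]

namespace PowerSeries

lemma coeff_pow_eq_sum_antidiagonalTuple {R : Type*} [CommSemiring R] (f : R⟦X⟧) (p n : ℕ) :
    coeff n (f ^ p) = ∑ l ∈ Finset.Nat.antidiagonalTuple p n, ∏ i, coeff (l i) f := by
  rw [← Fin.prod_const, coeff_prod]
  exact Finset.sum_equiv Finsupp.equivFunOnFinite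
    (by simp [Finset.Nat.mem_antidiagonalTuple]) (by simp)

variable {K : Type*} [Field K] [CharZero K]

lemma coeff_mul_rescale_exp (f : K⟦X⟧) (c : K) (n : ℕ) :
    coeff n (f * rescale c (exp K)) =
      ∑ t ∈ range (n + 1), c ^ (n - t) / (n - t)! * coeff t f := by
  rw [coeff_mul, Finset.Nat.sum_antidiagonal_eq_sum_range_succ_mk]
  refine sum_congr rfl fun t _ => ?_
  rw [coeff_rescale, coeff_exp, map_div₀, map_one, map_natCast]
  ring

lemma factorial_mul_coeff_mul_exp (f : K⟦X⟧) (n : ℕ) :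
    n ! * coeff n (f * exp K) = ∑ t ∈ range (n + 1), (n.descFactorial t : K) * coeff t f := by
  have hexp : exp K = rescale 1 (exp K) := by rw [rescale_one]; rfl
  rw [hexp, coeff_mul_rescale_exp, mul_sum]
  refine sum_congr rfl fun t ht => ?_
  have hfac : ((n - t)! * n.descFactorial t : K) = n ! := by
    exact_mod_cast factorial_mul_descFactorial (mem_range_succ_iff.1 ht)
  have hfac_ne : ((n - t)! : K) ≠ 0 := mod_cast (n - t).factorial_ne_zero
  rw [one_pow, ← hfac]
  field_simp

lemma exp_pow_mul_rescale_exp (p : ℕ) :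
    exp K ^ p * rescale (1 - p : K) (exp K) = exp K := by
  rw [exp_pow_eq_rescale_exp, exp_mul_exp_eq_exp_add, add_sub_cancel, rescale_one]
  rfl

end PowerSeries

/-- The p-th star power of a lattice function expressed in terms of its values. -/
theorem star_power_values (p : ℕ) (hp : 1 ≤ p) (ζ z : ℕ → ℝ)
    (hz : ∀ n : ℕ, z n = ∑ l ∈ Finset.range (n + 1), (Nat.descFactorial n l : ℝ) * ζ l) :
    ∀ n : ℕ,
      ∑ t ∈ Finset.range (n + 1), ∑ l ∈ Finset.Nat.antidiagonalTuple p t,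
        (∏ i : Fin p, ζ (l i)) * (Nat.descFactorial n t : ℝ)
      = (Nat.factorial n : ℝ) *
          ∑ t ∈ Finset.range (n + 1), ∑ k ∈ Finset.Nat.antidiagonalTuple p t,
            (-1 : ℝ) ^ (t + n) * ((p - 1 : ℕ) : ℝ) ^ (n - t) /
              ((∏ i : Fin p, (Nat.factorial (k i) : ℝ)) * (Nat.factorial (n - t) : ℝ)) *
              ∏ i : Fin p, z (k i) := by
  intro n
  set A : ℝ⟦X⟧ := mk ζ
  set Z : ℝ⟦X⟧ := mk fun k => z k / (k ! : ℝ)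
  have hZ : Z = A * exp ℝ := by
    ext m
    have hm := factorial_mul_coeff_mul_exp A m
    simp only [A, coeff_mk] at hm
    rw [coeff_mk, hz, ← hm, mul_div_cancel_left₀ _ (mod_cast m.factorial_ne_zero)]
  have hpow : A ^ p * exp ℝ = Z ^ p * rescale (-((p - 1 : ℕ) : ℝ)) (exp ℝ) := by
    rw [hZ, mul_pow, mul_assoc, Nat.cast_sub hp, Nat.cast_one, neg_sub,
      exp_pow_mul_rescale_exp]
  calc _ = (n ! : ℝ) * coeff n (A ^ p * exp ℝ) := by
        rw [factorial_mul_coeff_mul_exp]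
        refine sum_congr rfl fun t _ => ?_
        simp only [coeff_pow_eq_sum_antidiagonalTuple, A, coeff_mk, mul_sum, mul_comm]
    _ = (n ! : ℝ) * coeff n (Z ^ p * rescale (-((p - 1 : ℕ) : ℝ)) (exp ℝ)) := by rw [hpow]
    _ = _ := by
      rw [coeff_mul_rescale_exp]
      congr 1
      refine sum_congr rfl fun t ht => ?_
      rw [coeff_pow_eq_sum_antidiagonalTuple, mul_sum]
      refine sum_congr rfl fun k _ => ?_
      simp only [Z, coeff_mk, prod_div_distrib]
      rw [neg_pow, neg_one_pow_add_eq_neg_one_pow_sub (mem_range_succ_iff.1 ht)]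
      ring
end

section
/- Let ζ : ℕ → ℝ be a sequence and define z(n) = Σ_{l=0}^{n} (n!/(n−l)!) · ζ(l). Then for every m ∈ ℕ and every n ∈ ℕ: (Δ^m z)(n) = Σ_{l=0}^{n} (n!/(n−l)!) · ((l+m)!/l!) · ζ(l+m). -/
/-!
The falling factorials `n ↦ n.descFactorial l` are the basic sequence of `Δ`: Pascal's rule gives
`Δ (n ↦ n.descFactorial (l + 1)) = (l + 1) • (n ↦ n.descFactorial l)`. Hence `Δ` acts on
`n ↦ ∑ₗ n.descFactorial l * c l` as the shift `c l ↦ (l + 1) * c (l + 1)` of the coefficients,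
and iterating `m` times produces the factor `(l + m).descFactorial m`.
-/

/-- The forward difference operator acting on sequences. -/
def fwdDiffSeq (u : ℕ → ℝ) : ℕ → ℝ := fun n => u (n + 1) - u n

open Finset fwdDiff

theorem Nat.succ_descFactorial_succ_eq_add (n k : ℕ) :
    (n + 1).descFactorial (k + 1) = n.descFactorial (k + 1) + (k + 1) * n.descFactorial k := by
  simp only [Nat.descFactorial_eq_factorial_mul_choose, Nat.choose_succ_succ',
    Nat.factorial_succ]
  ring

theorem Nat.add_descFactorial_succ (k m : ℕ) :
    (k + m).descFactorial (m + 1) = k * (k + m).descFactorial m := by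
  rw [Nat.descFactorial_succ, Nat.add_sub_cancel]

def descFactorialTransform {R : Type*} [Semiring R] (c : ℕ → R) (n : ℕ) : R :=
  ∑ l ∈ range (n + 1), (n.descFactorial l : R) * c l

theorem descFactorialTransform_eq_sum_range {R : Type*} [Semiring R] (c : ℕ → R) {n N : ℕ}
    (hN : n < N) :
    descFactorialTransform c n = ∑ l ∈ range N, (n.descFactorial l : R) * c l := by
  refine sum_subset (range_subset_range.mpr hN) fun l _ hl ↦ ?_
  rw [Nat.descFactorial_eq_zero_iff_lt.mpr (by simpa using hl), Nat.cast_zero, zero_mul]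

theorem fwdDiff_descFactorialTransform {R : Type*} [Ring R] (c : ℕ → R) :
    Δ_[1] (descFactorialTransform c) =
      descFactorialTransform fun l ↦ ((l + 1 : ℕ) : R) * c (l + 1) := by
  ext n
  rw [fwdDiff, descFactorialTransform, descFactorialTransform_eq_sum_range c (N := n + 1 + 1)
    (by omega), ← sum_sub_distrib, sum_range_succ']
  simp only [Nat.descFactorial_zero, sub_self, add_zero, descFactorialTransform, ← sub_mul]
  refine sum_congr rfl fun l _ ↦ ?_
  rw [Nat.succ_descFactorial_succ_eq_add, Nat.cast_add, add_sub_cancel_left, mul_comm,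
    Nat.cast_mul, mul_assoc]

theorem fwdDiff_iter_descFactorialTransform {R : Type*} [Ring R] (c : ℕ → R) (m : ℕ) :
    (Δ_[1])^[m] (descFactorialTransform c) =
      descFactorialTransform fun l ↦ ((l + m).descFactorial m : R) * c (l + m) := by
  induction m with
  | zero => simp
  | succ m ih =>
    rw [Function.iterate_succ_apply', ih, fwdDiff_descFactorialTransform]
    congr with l
    rw [show l + (m + 1) = l + 1 + m by omega, Nat.add_descFactorial_succ, Nat.cast_mul,
      mul_assoc]

/-- The m-th forward difference of an interpolating transform in terms of shifted
Fourier coefficients. -/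
theorem fwdDiff_interpolating_transform (ζ z : ℕ → ℝ)
    (hz : ∀ n : ℕ, z n = ∑ l ∈ Finset.range (n + 1), (Nat.descFactorial n l : ℝ) * ζ l) :
    ∀ m n : ℕ,
      (fwdDiffSeq^[m] z) n =
        ∑ l ∈ Finset.range (n + 1),
          (Nat.descFactorial n l : ℝ) * (Nat.descFactorial (l + m) m : ℝ) * ζ (l + m) := by
  intro m n
  have hzT : z = descFactorialTransform ζ := funext hz
  have hΔ : fwdDiffSeq = fwdDiff (1 : ℕ) := rfl
  rw [hΔ, hzT, fwdDiff_iter_descFactorialTransform, descFactorialTransform]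
  exact sum_congr rfl fun l _ ↦ (mul_assoc _ _ _).symm
end

section
/- For sequences x, y : ℕ → ℝ define (x ⋆ y)(n) = n! · Σ_{(k_1,k_2) ∈ ℕ², k_1+k_2 ≤ n} (−1)^{k_1+k_2+n} · x(k_1)·y(k_2) / (k_1! · k_2! · (n−k_1−k_2)!). Then for all x, y : ℕ → ℝ and all n ∈ ℕ: (x ⋆ y)(n+1) − (x ⋆ y)(n) = ((Δx) ⋆ y)(n) + (x ⋆ (Δy))(n), where (Δu)(n) = u(n+1) − u(n). That is, the forward difference operator Δ is a derivation with respect to the product ⋆. -/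
/-- The star product of the Rota algebra of the forward difference operator, expressed
in terms of lattice values. -/
noncomputable def rotaStar (x y : ℕ → ℝ) : ℕ → ℝ := fun n =>
  (Nat.factorial n : ℝ) *
    ∑ k ∈ (Finset.range (n + 1) ×ˢ Finset.range (n + 1)).filter
        (fun k => k.1 + k.2 ≤ n),
      (-1 : ℝ) ^ (k.1 + k.2 + n) * x k.1 * y k.2 /
        ((Nat.factorial k.1 : ℝ) * (Nat.factorial k.2 : ℝ) *
          (Nat.factorial (n - k.1 - k.2) : ℝ))

/-!
Pass to exponential generating functions `egf u = ∑ u n Xⁿ / n!`. The kernel of `⋆` is a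
trinomial coefficient with the sign `(-1)ⁿ⁻ᵃ⁻ᵇ`, so `egf (x ⋆ y) = egf x * egf y * E` with
`E = egf (-1)ⁿ = e^{-X}`, while `egf (Δu) = (d/dX - 1) (egf u)`. Since `d/dX E = -E`, the Leibniz
rule for `d/dX` gives `(d/dX - 1)(X Y E) = ((d/dX - 1) X) Y E + X ((d/dX - 1) Y) E`.
-/

open PowerSeries Finset Nat

section Egf

variable {K : Type*} [Field K]

noncomputable def egf (u : ℕ → K) : K⟦X⟧ := PowerSeries.mk fun n => u n / n !

@[simp]
theorem coeff_egf (u : ℕ → K) (n : ℕ) : coeff n (egf u) = u n / n ! := coeff_mk _ _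

theorem egf_injective [CharZero K] : Function.Injective (egf : (ℕ → K) → K⟦X⟧) :=
  fun u v h => funext fun n => by simpa [Nat.factorial_ne_zero] using congrArg (coeff n) h

@[simp]
theorem egf_add (u v : ℕ → K) : egf (u + v) = egf u + egf v := by
  ext n; simp [add_div]

@[simp]
theorem egf_sub (u v : ℕ → K) : egf (u - v) = egf u - egf v := by
  ext n; simp [sub_div]

@[simp]
theorem egf_neg (u : ℕ → K) : egf (-u) = -egf u := by
  ext n; simp [neg_div]

theorem derivative_egf [CharZero K] (u : ℕ → K) : d⁄dX K (egf u) = egf fun n => u (n + 1) := by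
  ext n
  rw [coeff_derivative, coeff_egf, coeff_egf, Nat.factorial_succ, Nat.cast_mul]
  field_simp
  push_cast
  ring

theorem derivative_egf_neg_one_pow [CharZero K] :
    d⁄dX K (egf fun n => (-1) ^ n) = -egf fun n => (-1) ^ n := by
  rw [derivative_egf, ← egf_neg]
  congr 1
  ext n
  simp [pow_succ]

end Egf

theorem egf_fwdDiffSeq (u : ℕ → ℝ) : egf (fwdDiffSeq u) = d⁄dX ℝ (egf u) - egf u := by
  rw [derivative_egf, ← egf_sub]
  rfl

theorem sum_filter_add_le_eq_sum_range {M : Type*} [AddCommMonoid M] (n : ℕ) (f : ℕ × ℕ → M) :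
    ∑ k ∈ (range (n + 1) ×ˢ range (n + 1)).filter (fun k => k.1 + k.2 ≤ n), f k
      = ∑ a ∈ range (n + 1), ∑ b ∈ range (n - a + 1), f (a, b) :=
  sum_finset_product _ _ _ fun k => by simp only [mem_filter, mem_product, mem_range]; omega

theorem egf_rotaStar (x y : ℕ → ℝ) :
    egf (rotaStar x y) = egf x * (egf y * egf fun n => (-1) ^ n) := by
  ext n
  rw [coeff_egf, rotaStar, mul_div_cancel_left₀ _ (by positivity), coeff_mul,
    Nat.sum_antidiagonal_eq_sum_range_succ_mk, sum_filter_add_le_eq_sum_range]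
  refine sum_congr rfl fun a ha => ?_
  rw [coeff_mul, Nat.sum_antidiagonal_eq_sum_range_succ_mk, mul_sum]
  refine sum_congr rfl fun b hb => ?_
  have hab : a + b ≤ n := by simp only [mem_range] at ha hb; omega
  have hsign : (-1 : ℝ) ^ (a + b + n) = (-1) ^ (n - a - b) := by
    rw [show a + b + n = n - a - b + 2 * (a + b) by omega, pow_add, pow_mul]
    norm_num
  simp only [coeff_egf, hsign, Nat.sub_sub]
  field_simp

/-- The forward difference operator is a derivation with respect to the star product. -/
theorem fwdDiff_leibniz_rotaStar (x y : ℕ → ℝ) (n : ℕ) :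
    rotaStar x y (n + 1) - rotaStar x y n =
      rotaStar (fwdDiffSeq x) y n + rotaStar x (fwdDiffSeq y) n := by
  have h : fwdDiffSeq (rotaStar x y) = rotaStar (fwdDiffSeq x) y + rotaStar x (fwdDiffSeq y) := by
    apply egf_injective
    simp only [egf_add, egf_fwdDiffSeq, egf_rotaStar, Derivation.leibniz,
      derivative_egf_neg_one_pow, smul_eq_mul]
    ring
  exact congrFun h n
end
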